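/- Let T_n be the n×n lower bidiagonal Toeplitz matrix with 1 on the diagonal and 1 on the first subdiagonal (symbol f(θ) = 1 + e^{iθ}). Then the eigenvalues of the symmetric matrix H_n = Y_n T_n are exactly (−1)^{j+1} · 2cos(jπ/(2n+1)) for j = 1,...,n; in particular the singular values of T_n are 2cos(jπ/(2n+1)), j = 1,...,n. -/

import Mathlib

open Matrix Polynomial Real

/-!
Reversing the rows of `T_n` turns its two bands into anti-diagonal bands, so `H_n = Y_n T_n` is
symmetric. With `φ_j = (j+1)π/(2n+1)` the vector `v_k = sin((k+1)·2φ_j)` extends by `v_{-1} = 0`,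
so `(T_n v)_r = sin((r+1)·2φ_j) + sin(r·2φ_j)`; at the flipped row `r = n-1-i` the sum-to-product
formula and `(2n+1)φ_j = (j+1)π` give `H_n v = (-1)^j·2cos φ_j · v`. Since `0 < φ_j < π/2`, these
`n` eigenvalues are distinct, hence all roots of the characteristic polynomial. Finally
`H_n² = T_nᵀ Y_n² T_n = T_nᵀ T_n`, so its eigenvalues are the squares `4cos² φ_j`.
-/

/-- The `n×n` flip (anti-identity) matrix. -/
def flipMatrix (n : ℕ) : Matrix (Fin n) (Fin n) ℝ :=
  Matrix.of fun i j => if (i : ℕ) + (j : ℕ) + 2 = n + 1 then 1 else 0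

open Function

namespace Matrix

theorem isRoot_charpoly_of_mulVec_eq_smul {R n : Type*} [CommRing R] [IsDomain R] [Fintype n]
    [DecidableEq n] {M : Matrix n n R} {μ : R} {v : n → R} (hv : v ≠ 0)
    (h : M *ᵥ v = μ • v) : M.charpoly.IsRoot μ := by
  rw [IsRoot, eval_charpoly, ← exists_mulVec_eq_zero_iff]
  exact ⟨v, hv, by ext i; simp [sub_mulVec, h]⟩

theorem charpoly_eq_prod_of_injective_eigenvalues {K n : Type*} [Field K] [Fintype n]
    [DecidableEq n] {M : Matrix n n K} {μ : n → K} (hμ : Injective μ)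
    (hv : ∀ j, ∃ v ≠ 0, M *ᵥ v = μ j • v) : M.charpoly = ∏ j, (X - C (μ j)) := by
  refine eq_of_monic_of_dvd_of_natDegree_le (monic_prod_of_monic _ _ fun j _ ↦ monic_X_sub_C _)
    M.charpoly_monic ?_ ?_
  · refine Fintype.prod_dvd_of_coprime (pairwise_coprime_X_sub_C hμ) fun j ↦ ?_
    obtain ⟨v, hv0, hvμ⟩ := hv j
    exact dvd_iff_isRoot.mpr (isRoot_charpoly_of_mulVec_eq_smul hv0 hvμ)
  · rw [charpoly_natDegree_eq_dim, natDegree_prod_of_monic _ _ fun j _ ↦ monic_X_sub_C _]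
    simp

end Matrix

theorem flipMatrix_eq_permMatrix (n : ℕ) : flipMatrix n = Fin.revPerm.permMatrix ℝ := by
  ext i j
  simp only [flipMatrix, of_apply, PEquiv.toMatrix_apply, Equiv.toPEquiv_apply, Option.mem_def,
    Option.some.injEq, Fin.revPerm_apply, Fin.ext_iff, Fin.val_rev]
  exact if_congr (by omega) rfl rfl

theorem flipMatrix_transpose (n : ℕ) : (flipMatrix n)ᵀ = flipMatrix n := by
  rw [flipMatrix_eq_permMatrix, transpose_permMatrix, Equiv.Perm.inv_def, Fin.revPerm_symm]

theorem flipMatrix_mul_self (n : ℕ) : flipMatrix n * flipMatrix n = 1 := by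
  rw [flipMatrix_eq_permMatrix, ← permMatrix_mul,
    show Fin.revPerm * Fin.revPerm = (1 : Equiv.Perm (Fin n)) from Equiv.ext Fin.rev_rev,
    permMatrix_one]

theorem flipMatrix_mul {n : ℕ} (M : Matrix (Fin n) (Fin n) ℝ) :
    flipMatrix n * M = M.submatrix Fin.rev id := by
  rw [flipMatrix_eq_permMatrix, PEquiv.toMatrix_toPEquiv_mul]; rfl

theorem flipMatrix_mulVec {n : ℕ} (v : Fin n → ℝ) : flipMatrix n *ᵥ v = v ∘ Fin.rev := by
  rw [flipMatrix_eq_permMatrix, permMatrix_mulVec]; rfl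

def lowerBidiagonalOnes (R : Type*) [Zero R] [One R] (n : ℕ) : Matrix (Fin n) (Fin n) R :=
  of fun s t => if (s : ℕ) = t ∨ (s : ℕ) = t + 1 then 1 else 0

theorem lowerBidiagonalOnes_mulVec {R : Type*} [NonAssocSemiring R] {n : ℕ} {w : ℕ → R}
    (hw : w 0 = 0) (r : Fin n) :
    (lowerBidiagonalOnes R n *ᵥ fun k ↦ w (k + 1)) r = w (r + 1) + w r := by
  simp only [mulVec, dotProduct, lowerBidiagonalOnes, of_apply, ite_mul, one_mul, zero_mul]
  rcases r with ⟨_ | m, hm⟩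
  · rw [Fintype.sum_eq_single ⟨0, hm⟩ fun k hk ↦ if_neg (by simp [Fin.ext_iff] at hk ⊢; omega)]
    simp [hw]
  · rw [Fintype.sum_eq_add ⟨m + 1, hm⟩ ⟨m, by omega⟩ (by simp [Fin.ext_iff])
      fun k hk ↦ if_neg (by simp [Fin.ext_iff] at hk ⊢; omega)]
    simp

theorem flipMatrix_mul_lowerBidiagonalOnes_transpose (n : ℕ) :
    (flipMatrix n * lowerBidiagonalOnes ℝ n)ᵀ = flipMatrix n * lowerBidiagonalOnes ℝ n := by
  ext i k
  simp only [flipMatrix_mul, transpose_apply, submatrix_apply, id, lowerBidiagonalOnes, of_apply,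
    Fin.val_rev]
  exact if_congr (by omega) rfl rfl

noncomputable def bidiagAngle (n j : ℕ) : ℝ := (j + 1) * π / (2 * n + 1)

theorem bidiagAngle_mem_Ioo {n j : ℕ} (hj : j < n) : bidiagAngle n j ∈ Set.Ioo 0 (π / 2) := by
  have hj' : (j : ℝ) + 1 ≤ n := by exact_mod_cast hj
  refine ⟨by unfold bidiagAngle; positivity, ?_⟩
  rw [bidiagAngle, div_lt_iff₀ (by positivity)]
  nlinarith [pi_pos]

theorem cos_bidiagAngle_pos {n j : ℕ} (hj : j < n) : 0 < cos (bidiagAngle n j) :=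
  cos_pos_of_mem_Ioo ⟨by linarith [(bidiagAngle_mem_Ioo hj).1, pi_pos], (bidiagAngle_mem_Ioo hj).2⟩

theorem injective_cos_bidiagAngle (n : ℕ) : Injective fun j : Fin n ↦ cos (bidiagAngle n j) := by
  have mem_Icc (j : Fin n) : bidiagAngle n j ∈ Set.Icc 0 π := by
    have := bidiagAngle_mem_Ioo j.2
    exact ⟨this.1.le, by linarith [this.2, pi_pos]⟩
  intro j k h
  have h' := injOn_cos (mem_Icc j) (mem_Icc k) h
  rw [bidiagAngle, bidiagAngle, div_left_inj' (by positivity), mul_left_inj' pi_ne_zero,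
    add_left_inj, Nat.cast_inj] at h'
  exact Fin.ext h'

theorem sin_add_sin_bidiagAngle (n j : ℕ) (x : ℝ) :
    sin ((n - x + 1) * (2 * bidiagAngle n j)) + sin ((n - x) * (2 * bidiagAngle n j)) =
      (-1) ^ j * (2 * cos (bidiagAngle n j)) * sin (x * (2 * bidiagAngle n j)) := by
  set φ := bidiagAngle n j
  have hφ : (2 * n + 1) * φ = (j + 1 : ℕ) * π := by
    simp only [φ, bidiagAngle]; push_cast; field_simp
  set P := (j + 1 : ℕ) * π - x * (2 * φ)
  have hP : sin P = (-1) ^ j * sin (x * (2 * φ)) := by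
    rw [sin_nat_mul_pi_sub, pow_succ]; ring
  rw [show (n - x + 1) * (2 * φ) = P + φ by linear_combination hφ,
    show (n - x) * (2 * φ) = P - φ by linear_combination hφ, sin_add P φ, sin_sub P φ, hP]
  ring

noncomputable def bidiagEigenvector (n j : ℕ) : Fin n → ℝ :=
  fun k ↦ sin ((k + 1) * (2 * bidiagAngle n j))

theorem bidiagEigenvector_ne_zero {n j : ℕ} (hj : j < n) : bidiagEigenvector n j ≠ 0 := by
  have hφ := bidiagAngle_mem_Ioo hj
  refine Function.ne_iff.mpr ⟨⟨0, by omega⟩, (sin_pos_of_pos_of_lt_pi ?_ ?_).ne'⟩ <;>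
    simp only [Nat.cast_zero, zero_add, one_mul] <;> linarith [hφ.1, hφ.2]

theorem flipMatrix_mul_lowerBidiagonalOnes_mulVec_bidiagEigenvector (n j : ℕ) :
    (flipMatrix n * lowerBidiagonalOnes ℝ n) *ᵥ bidiagEigenvector n j =
      ((-1) ^ j * (2 * cos (bidiagAngle n j))) • bidiagEigenvector n j := by
  ext i
  have hT := lowerBidiagonalOnes_mulVec (w := fun m : ℕ ↦ sin (m * (2 * bidiagAngle n j)))
    (by simp) (Fin.rev i)
  have hrev : ((Fin.rev i : ℕ) : ℝ) = n - ((i : ℝ) + 1) := by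
    rw [Fin.val_rev, Nat.cast_sub (by omega)]; push_cast; ring
  push_cast at hT
  rw [← mulVec_mulVec, flipMatrix_mulVec, Function.comp_apply]
  unfold bidiagEigenvector
  rw [hT, hrev, Pi.smul_apply, smul_eq_mul, ← sin_add_sin_bidiagAngle]

theorem flipMatrix_mul_mul_self_of_transpose_eq {n : ℕ} {M : Matrix (Fin n) (Fin n) ℝ}
    (hM : (flipMatrix n * M)ᵀ = flipMatrix n * M) :
    (flipMatrix n * M) * (flipMatrix n * M) = Mᵀ * M := by
  nth_rewrite 1 [← hM]
  rw [transpose_mul, flipMatrix_transpose, mul_assoc, ← mul_assoc (flipMatrix n),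
    flipMatrix_mul_self, one_mul]

theorem charpoly_flipMatrix_mul_lowerBidiagonalOnes (n : ℕ) :
    (flipMatrix n * lowerBidiagonalOnes ℝ n).charpoly =
      ∏ j : Fin n, (X - C ((-1) ^ (j : ℕ) * (2 * cos (bidiagAngle n j)))) := by
  refine charpoly_eq_prod_of_injective_eigenvalues (fun j k h ↦ injective_cos_bidiagAngle n ?_)
    fun j ↦ ⟨_, bidiagEigenvector_ne_zero j.2,
      flipMatrix_mul_lowerBidiagonalOnes_mulVec_bidiagEigenvector n j⟩
  simpa [abs_mul, abs_of_pos (cos_bidiagAngle_pos j.2), abs_of_pos (cos_bidiagAngle_pos k.2)]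
    using congrArg abs h

theorem charpoly_lowerBidiagonalOnes_transpose_mul_self (n : ℕ) :
    ((lowerBidiagonalOnes ℝ n)ᵀ * lowerBidiagonalOnes ℝ n).charpoly =
      ∏ j : Fin n, (X - C ((2 * cos (bidiagAngle n j)) ^ 2)) := by
  rw [← flipMatrix_mul_mul_self_of_transpose_eq (flipMatrix_mul_lowerBidiagonalOnes_transpose n)]
  refine charpoly_eq_prod_of_injective_eigenvalues (fun j k h ↦ injective_cos_bidiagAngle n ?_)
    fun j ↦ ⟨_, bidiagEigenvector_ne_zero j.2, ?_⟩
  · have hj := cos_bidiagAngle_pos j.2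
    have hk := cos_bidiagAngle_pos k.2
    simpa using (pow_left_inj₀ (by positivity) (by positivity) two_ne_zero).mp h
  · rw [← mulVec_mulVec, flipMatrix_mul_lowerBidiagonalOnes_mulVec_bidiagEigenvector, mulVec_smul,
      flipMatrix_mul_lowerBidiagonalOnes_mulVec_bidiagEigenvector, smul_smul, ← sq, mul_pow,
      ← pow_mul, pow_mul', neg_one_sq, one_pow, one_mul]

/-- for the lower bidiagonal Toeplitz matrix `T_n` with `1` on the
diagonal and first subdiagonal (symbol `1 + e^{iθ}`), the eigenvalues of the
symmetric matrix `H_n = Y_n T_n` are exactly `(−1)^{j+1}·2cos(jπ/(2n+1))`,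
`j = 1,…,n` (with multiplicity, via the characteristic polynomial); in particular
the singular values of `T_n` are `2cos(jπ/(2n+1))`, `j = 1,…,n`. -/
theorem stmt13 (n : ℕ) (T : Matrix (Fin n) (Fin n) ℝ)
    (hT : ∀ s t : Fin n, T s t =
      if (s : ℕ) = (t : ℕ) ∨ (s : ℕ) = (t : ℕ) + 1 then 1 else 0) :
    (flipMatrix n * T)ᵀ = flipMatrix n * T ∧
    (flipMatrix n * T).charpoly =
      ∏ j : Fin n, (X - C ((-1 : ℝ) ^ (j : ℕ) *
        (2 * Real.cos ((((j : ℕ) + 1) * π) / (2 * n + 1))))) ∧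
    (Tᵀ * T).charpoly =
      ∏ j : Fin n, (X - C ((2 * Real.cos ((((j : ℕ) + 1) * π) / (2 * n + 1))) ^ 2)) := by
  obtain rfl : T = lowerBidiagonalOnes ℝ n := ext hT
  exact ⟨flipMatrix_mul_lowerBidiagonalOnes_transpose n,
    charpoly_flipMatrix_mul_lowerBidiagonalOnes n,
    charpoly_lowerBidiagonalOnes_transpose_mul_self n⟩
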